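/- The determinant is the minimal CH-norm on the matrix algebra M_n(F) over an infinite field F. -/

import Mathlib

open TensorProduct

variable {F R ι : Type*}

/-- The polynomial function on `R` attached to a polynomial in the coordinates
along the basis `b`. -/
noncomputable def polyFun [Field F] [Ring R] [Algebra F R] [Fintype ι]
    (b : Module.Basis ι F R) (p : MvPolynomial ι F) : R → F :=
  fun r => MvPolynomial.eval (fun i => b.repr r i) p

/-- The abstract characteristic polynomial `χ_a(t) = N(t·1 - a)` of an element `a`,
for the polynomial map attached to `p`. -/
noncomputable def charPolyOf [Field F] [Ring R] [Algebra F R] [Fintype ι]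
    (b : Module.Basis ι F R) (p : MvPolynomial ι F) (a : R) : Polynomial F :=
  MvPolynomial.aeval
    (fun i => Polynomial.C (b.repr 1 i) * Polynomial.X - Polynomial.C (b.repr a i)) p

/-- `p` defines a Cayley–Hamilton norm of degree `n` on `R` (w.r.t. the basis `b`):
homogeneous of degree `n`, multiplicative, and every element satisfies its abstract
characteristic polynomial. -/
structure IsCHNorm [Field F] [Ring R] [Algebra F R] [Fintype ι]
    (b : Module.Basis ι F R) (n : ℕ) (p : MvPolynomial ι F) : Prop where
  homog : ∀ (α : F) (r : R), polyFun b p (α • r) = α ^ n * polyFun b p r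
  mult : ∀ x y : R, polyFun b p (x * y) = polyFun b p x * polyFun b p y
  ch : ∀ a : R, Polynomial.aeval a (charPolyOf b p a) = 0

/-- The generic element `x = Σ xᵢ aᵢ` of `R ⊗ K`, `K` the rational function field. -/
noncomputable def genElt [Field F] [Ring R] [Algebra F R] [Fintype ι] (b : Module.Basis ι F R) :
    FractionRing (MvPolynomial ι F) ⊗[F] R :=
  ∑ i, algebraMap (MvPolynomial ι F) (FractionRing (MvPolynomial ι F)) (MvPolynomial.X i)
    ⊗ₜ[F] b i

/-!
The determinant is a CH-norm by the Cayley–Hamilton theorem. Conversely, let `N` be a CH-norm of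
degree `k`. The constant term of the abstract characteristic polynomial `χ_a` is `(-1)^k N(a)`, so
`χ_a(a) = 0` writes `(-1)^k N(a)` as `a` times a polynomial in `a`: `N` vanishes on singular
matrices. In the variable `x₀₀` the generic determinant is a primitive linear polynomial
`D x₀₀ + E` (a factor of `det` not involving `x₀₀` divides every first-row minor, hence involves no
variable at all). Since `F` is infinite, vanishing on `det = 0` makes `-E/D` a root of `N` over
the fraction field of the other variables, and Gauss's lemma gives `det ∣ N`. The cofactor
`g = N / det` is multiplicative on invertible matrices, hence everywhere, invertible matrices
being Zariski-dense.
-/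

open MvPolynomial

section CHNorm

variable [Field F] [Ring R] [Algebra F R] [Fintype ι] {b : Module.Basis ι F R}

theorem charPolyOf_coeff_zero (p : MvPolynomial ι F) (a : R) :
    (charPolyOf b p a).coeff 0 = polyFun b p (-a) := by
  rw [Polynomial.coeff_zero_eq_eval_zero, ← Polynomial.coe_aeval_eq_eval, charPolyOf,
    MvPolynomial.comp_aeval_apply]
  simp [polyFun, MvPolynomial.aeval_eq_eval]

theorem IsCHNorm.polyFun_eq_zero_of_not_isUnit {k : ℕ} {p : MvPolynomial ι F}
    (hp : IsCHNorm b k p) {a : R} (ha : ¬IsUnit a) : polyFun b p a = 0 := by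
  set χ := charPolyOf b p a
  have hc : χ.coeff 0 = (-1) ^ k * polyFun b p a := by
    rw [charPolyOf_coeff_zero, ← neg_one_smul F a, hp.homog]
  by_contra h
  have hc0 : χ.coeff 0 ≠ 0 := by rw [hc]; exact mul_ne_zero (pow_ne_zero _ (by norm_num)) h
  set u : R := -(χ.coeff 0)⁻¹ • Polynomial.aeval a χ.divX
  -- `χ(a) = 0` and `χ = X * χ.divX + χ(0)` exhibit an inverse of `a`
  have hright : a * u = 1 := by
    have : Polynomial.aeval a χ = 0 := hp.ch a
    rw [← Polynomial.X_mul_divX_add χ, map_add, map_mul, Polynomial.aeval_X,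
      Polynomial.aeval_C, Algebra.algebraMap_eq_smul_one] at this
    rw [mul_smul_comm, eq_neg_of_add_eq_zero_left this, neg_smul, smul_neg, neg_neg, smul_smul,
      inv_mul_cancel₀ hc0, one_smul]
  have hleft : u * a = 1 := by
    have : Polynomial.aeval a χ = 0 := hp.ch a
    rw [← Polynomial.divX_mul_X_add χ, map_add, map_mul, Polynomial.aeval_X,
      Polynomial.aeval_C, Algebra.algebraMap_eq_smul_one] at this
    rw [smul_mul_assoc, eq_neg_of_add_eq_zero_left this, neg_smul, smul_neg, neg_neg, smul_smul,
      inv_mul_cancel₀ hc0, one_smul]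
  exact ha ⟨⟨a, u, hright, hleft⟩, rfl⟩

end CHNorm

section MatrixNorm

open Matrix

variable {F m n : Type*} [Field F] [Fintype m] [Fintype n]

theorem Matrix.stdBasis_repr_apply (M : Matrix m n F) (ij : m × n) :
    (stdBasis F m n).repr M ij = M ij.1 ij.2 := by
  simp [stdBasis, Module.Basis.map_repr, Pi.basis_repr, Pi.basisFun_repr]

variable [DecidableEq m]

theorem polyFun_stdBasis (p : MvPolynomial (m × m) F) (M : Matrix m m F) :
    polyFun (stdBasis F m m) p M = eval (fun ij => M ij.1 ij.2) p := by
  simp only [polyFun, stdBasis_repr_apply]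

theorem polyFun_stdBasis_det (M : Matrix m m F) :
    polyFun (stdBasis F m m) (mvPolynomialX m m F).det M = M.det := by
  rw [polyFun_stdBasis, eval_det_mvPolynomialX]
  rfl

theorem polyFun_stdBasis_det_mul (g : MvPolynomial (m × m) F) (M : Matrix m m F) :
    polyFun (stdBasis F m m) ((mvPolynomialX m m F).det * g) M =
      polyFun (stdBasis F m m) g M * M.det := by
  rw [polyFun_stdBasis, map_mul, ← polyFun_stdBasis, ← polyFun_stdBasis, polyFun_stdBasis_det,
    mul_comm]

theorem charPolyOf_stdBasis_det (M : Matrix m m F) :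
    charPolyOf (stdBasis F m m) (mvPolynomialX m m F).det M = M.charpoly := by
  rw [charPolyOf, AlgHom.map_det, charpoly]
  congr 1
  ext i j
  by_cases h : i = j <;>
    simp [stdBasis_repr_apply, charmatrix, mvPolynomialX, one_apply, h, diagonal]

theorem isCHNorm_det :
    IsCHNorm (stdBasis F m m) (Fintype.card m) (mvPolynomialX m m F).det where
  homog α M := by simp only [polyFun_stdBasis_det, det_smul]
  mult M N := by simp only [polyFun_stdBasis_det, det_mul]
  ch M := by rw [charPolyOf_stdBasis_det, aeval_self_charpoly]

theorem IsCHNorm.polyFun_eq_zero_of_det_eq_zero {k : ℕ} {p : MvPolynomial (m × m) F}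
    (hp : IsCHNorm (stdBasis F m m) k p) {M : Matrix m m F} (hM : M.det = 0) :
    polyFun (stdBasis F m m) p M = 0 :=
  hp.polyFun_eq_zero_of_not_isUnit (by simp [isUnit_iff_isUnit_det, hM])

end MatrixNorm

section PolynomialFun

variable {F m : Type*} [Field F]

def Matrix.IsPolynomialFun (φ : Matrix m m F → F) : Prop :=
  ∃ p : MvPolynomial (m × m) F, ∀ M, φ M = eval (fun ij => M ij.1 ij.2) p

namespace Matrix.IsPolynomialFun

variable {φ ψ : Matrix m m F → F}

theorem mul_const (hφ : IsPolynomialFun φ) (c : F) : IsPolynomialFun (fun M => φ M * c) := by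
  obtain ⟨p, hp⟩ := hφ
  exact ⟨p * MvPolynomial.C c, fun M => by simp [hp]⟩

variable [Fintype m]

theorem comp_mul_left (hφ : IsPolynomialFun φ) (A : Matrix m m F) :
    IsPolynomialFun (fun M => φ (A * M)) := by
  obtain ⟨p, hp⟩ := hφ
  refine ⟨eval₂ MvPolynomial.C (fun ij => (A.map MvPolynomial.C * mvPolynomialX m m F :
    Matrix m m (MvPolynomial (m × m) F)) ij.1 ij.2) p, fun M => ?_⟩
  dsimp only
  rw [hp, ← eval_assoc]
  congr 2 with ij
  simp [Matrix.mul_apply, mvPolynomialX]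

theorem comp_mul_right (hφ : IsPolynomialFun φ) (A : Matrix m m F) :
    IsPolynomialFun (fun M => φ (M * A)) := by
  obtain ⟨p, hp⟩ := hφ
  refine ⟨eval₂ MvPolynomial.C (fun ij => (mvPolynomialX m m F * A.map MvPolynomial.C :
    Matrix m m (MvPolynomial (m × m) F)) ij.1 ij.2) p, fun M => ?_⟩
  dsimp only
  rw [hp, ← eval_assoc]
  congr 2 with ij
  simp [Matrix.mul_apply, mvPolynomialX]

variable [DecidableEq m]

theorem eq_of_eqOn_det_ne_zero [Infinite F] (hφ : IsPolynomialFun φ) (hψ : IsPolynomialFun ψ)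
    (h : ∀ M, M.det ≠ 0 → φ M = ψ M) : φ = ψ := by
  obtain ⟨p, hp⟩ := hφ
  obtain ⟨q, hq⟩ := hψ
  have hpq : p = q := MvPolynomial.eq_of_eval_eq_on_gl fun g => by
    rw [← hp, ← hq]
    exact h g (g.isUnit.map Matrix.detMonoidHom).ne_zero
  funext M
  rw [hp, hq, hpq]

theorem map_mul_of_map_mul_of_det_ne_zero [Infinite F] (hφ : IsPolynomialFun φ)
    (h : ∀ X Y, X.det ≠ 0 → Y.det ≠ 0 → φ (X * Y) = φ X * φ Y) (X Y : Matrix m m F) :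
    φ (X * Y) = φ X * φ Y := by
  have hunit : ∀ X : Matrix m m F, X.det ≠ 0 → ∀ Y, φ (X * Y) = φ X * φ Y := fun X hX =>
    congrFun <| eq_of_eqOn_det_ne_zero (hφ.comp_mul_left X)
      (by simpa only [mul_comm (φ X)] using hφ.mul_const (φ X)) (h X · hX)
  exact congrFun (eq_of_eqOn_det_ne_zero (hφ.comp_mul_right Y) (hφ.mul_const (φ Y))
    fun X hX => hunit X hX Y) X

theorem map_mul_of_eq_mul_det [Infinite F] (hψ : IsPolynomialFun ψ)
    (hφ : ∀ X Y, φ (X * Y) = φ X * φ Y) (h : ∀ M, φ M = ψ M * M.det) (X Y : Matrix m m F) :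
    ψ (X * Y) = ψ X * ψ Y :=
  hψ.map_mul_of_map_mul_of_det_ne_zero (fun X Y hX hY => by
    have := hφ X Y
    rw [h, h, h, det_mul] at this
    exact mul_right_cancel₀ (mul_ne_zero hX hY) (by linear_combination this)) X Y

end Matrix.IsPolynomialFun

end PolynomialFun

namespace MvPolynomial

variable {R σ : Type*}

theorem notMem_vars_of_dvd [CommRing R] [IsDomain R] {p q : MvPolynomial σ R} {i : σ}
    (hpq : p ∣ q) (hq : q ≠ 0) (hi : i ∉ q.vars) : i ∉ p.vars := by
  obtain ⟨r, rfl⟩ := hpq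
  rw [mem_vars_iff_degreeOf_ne_zero, not_not] at hi ⊢
  rw [degreeOf_mul_eq (left_ne_zero_of_mul hq) (right_ne_zero_of_mul hq)] at hi
  omega

theorem dvd_pderiv_of_dvd [CommSemiring R] {p q : MvPolynomial σ R} {i : σ} (hpq : p ∣ q)
    (hi : i ∉ p.vars) : p ∣ pderiv i q := by
  obtain ⟨r, rfl⟩ := hpq
  rw [pderiv_mul, pderiv_eq_zero_of_notMem_vars hi, zero_mul, zero_add]
  exact dvd_mul_right p _

theorem isUnit_of_vars_eq_empty [Field R] {p : MvPolynomial σ R} (hp : p ≠ 0)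
    (hvars : p.vars = ∅) : IsUnit p := by
  rw [vars_eq_empty_iff_eq_C] at hvars
  rw [hvars] at hp ⊢
  exact (isUnit_iff_ne_zero.mpr fun h => hp (by rw [h, C_0])).map C

end MvPolynomial

namespace Polynomial

theorem map_eval_scaleRoots_neg {B K : Type*} [CommRing B] [Field K] (f : B →+* K) (q : B[X])
    {D : B} (E : B) (hD : f D ≠ 0) :
    f ((q.scaleRoots D).eval (-E)) = f D ^ q.natDegree * q.eval₂ f (-f E / f D) := by
  rw [← eval₂_at_apply, ← scaleRoots_eval₂_mul, mul_div_cancel₀ _ hD, map_neg]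

theorem IsPrimitive.dvd_of_isRoot {B K : Type*} [CommRing B] [IsDomain B] [IsGCDMonoid B]
    [Field K] [Algebra B K] [IsFractionRing B K] {D E : B}
    (hprim : (C D * X + C E).IsPrimitive) (hD : D ≠ 0) {q : B[X]}
    (hq : (q.map (algebraMap B K)).IsRoot (-algebraMap B K E / algebraMap B K D)) :
    C D * X + C E ∣ q := by
  have hD' : algebraMap B K D ≠ 0 := (map_ne_zero_iff _ (IsFractionRing.injective B K)).mpr hD
  refine hprim.dvd_of_fraction_map_dvd_fraction_map (K := K) ?_
  have hlin : (C D * X + C E).map (algebraMap B K) =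
      C (algebraMap B K D) * (X - C (-algebraMap B K E / algebraMap B K D)) := by
    rw [mul_sub, ← C_mul, mul_div_cancel₀ _ hD']
    simp
  rw [hlin, (isUnit_C.mpr (Ne.isUnit hD')).mul_left_dvd]
  exact dvd_iff_isRoot.mpr hq

end Polynomial

namespace MvPolynomial

variable {R σ : Type*} [CommRing R] [DecidableEq σ]

noncomputable def equivPolynomialIn (a : σ) :
    MvPolynomial σ R ≃ₐ[R] Polynomial (MvPolynomial {b // b ≠ a} R) :=
  (renameEquiv R (Equiv.optionSubtypeNe a).symm).trans (optionEquivLeft R _)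

theorem natDegree_equivPolynomialIn (a : σ) (p : MvPolynomial σ R) :
    (equivPolynomialIn a p).natDegree = degreeOf a p :=
  (degreeOf_eq_natDegree a p).symm

theorem notMem_vars_equivPolynomialIn_symm_C (a : σ) (r : MvPolynomial {b // b ≠ a} R) :
    a ∉ ((equivPolynomialIn a).symm (Polynomial.C r)).vars := by
  rw [mem_vars_iff_degreeOf_ne_zero, not_not, ← natDegree_equivPolynomialIn,
    AlgEquiv.apply_symm_apply, Polynomial.natDegree_C]

theorem eval_eq_eval_map_equivPolynomialIn (a : σ) (s : {b // b ≠ a} → R) (t : R)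
    (p : MvPolynomial σ R) :
    eval (fun b => if h : b = a then t else s ⟨b, h⟩) p =
      ((equivPolynomialIn a p).map (eval s)).eval t := by
  rw [equivPolynomialIn, AlgEquiv.trans_apply, ← optionEquivLeft_elim_eval, renameEquiv_apply,
    eval_rename]
  congr 2 with b
  by_cases h : b = a
  · subst h; simp
  · simp [h, Equiv.optionSubtypeNe_symm_of_ne h]

theorem isRoot_map_equivPolynomialIn_of_eval_eq_zero {R σ : Type*} [Field R] [Infinite R]
    [DecidableEq σ] {a : σ} {P Q : MvPolynomial σ R}
    {D E : MvPolynomial {b // b ≠ a} R} (hP : equivPolynomialIn a P = .C D * .X + .C E)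
    (hD : D ≠ 0) (hQ : ∀ s, eval s P = 0 → eval s Q = 0) (K : Type*) [Field K]
    [Algebra (MvPolynomial {b // b ≠ a} R) K] [IsFractionRing (MvPolynomial {b // b ≠ a} R) K] :
    ((equivPolynomialIn a Q).map (algebraMap _ K)).IsRoot
      (-algebraMap _ K E / algebraMap _ K D) := by
  -- `G = D ^ d * Q(-E/D)` with `d` the degree of `Q` in `X a`: the value at the root with
  -- denominators cleared
  set G := ((equivPolynomialIn a Q).scaleRoots D).eval (-E) with hG_def
  have hG : G = 0 := by
    suffices G * D = 0 from (mul_eq_zero.mp this).resolve_right hD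
    refine MvPolynomial.funext fun s => ?_
    rw [map_mul, map_zero]
    by_cases hs : eval s D = 0
    · rw [hs, mul_zero]
    have hPs : eval (fun b => if h : b = a then -eval s E / eval s D else s ⟨b, h⟩) P = 0 := by
      rw [eval_eq_eval_map_equivPolynomialIn, hP]
      simp [mul_div_cancel₀ _ hs]
    rw [Polynomial.map_eval_scaleRoots_neg (eval s) _ E hs, ← Polynomial.eval_map,
      ← eval_eq_eval_map_equivPolynomialIn, hQ _ hPs, mul_zero, zero_mul]
  have hD' : algebraMap _ K D ≠ 0 := (map_ne_zero_iff _ (IsFractionRing.injective _ K)).mpr hD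
  have := Polynomial.map_eval_scaleRoots_neg (algebraMap _ K) (equivPolynomialIn a Q) E hD'
  rw [← hG_def, hG, map_zero, eq_comm, mul_eq_zero, or_iff_right (pow_ne_zero _ hD')] at this
  rwa [Polynomial.IsRoot, Polynomial.eval_map]

end MvPolynomial

section GenericDet

open Matrix

variable (F : Type*) [Field F] {m : ℕ}

noncomputable def firstRowMinor (j : Fin (m + 1)) : MvPolynomial (Fin (m + 1) × Fin (m + 1)) F :=
  ((mvPolynomialX (Fin (m + 1)) (Fin (m + 1)) F).submatrix Fin.succ j.succAbove).det

variable {F}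

theorem firstRowMinor_eq_rename (j : Fin (m + 1)) :
    firstRowMinor F j =
      rename (fun p : Fin m × Fin m => (p.1.succ, j.succAbove p.2))
        (mvPolynomialX (Fin m) (Fin m) F).det := by
  rw [firstRowMinor, AlgHom.map_det]
  congr 1
  ext a b
  simp [mvPolynomialX]

theorem firstRowMinor_ne_zero (j : Fin (m + 1)) : firstRowMinor F j ≠ 0 := by
  have hinj : Function.Injective fun p : Fin m × Fin m => (p.1.succ, j.succAbove p.2) :=
    fun p q hpq => Prod.ext (Fin.succ_injective _ (Prod.ext_iff.mp hpq).1)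
      (j.succAbove_right_injective (Prod.ext_iff.mp hpq).2)
  rw [firstRowMinor_eq_rename, Ne, ← map_zero (rename _), (rename_injective _ hinj).eq_iff]
  exact det_mvPolynomialX_ne_zero (Fin m) F

theorem mem_vars_firstRowMinor {j : Fin (m + 1)} {w : Fin (m + 1) × Fin (m + 1)}
    (hw : w ∈ (firstRowMinor F j).vars) : w.1 ≠ 0 ∧ w.2 ≠ j := by
  classical
  rw [firstRowMinor_eq_rename] at hw
  obtain ⟨p, -, rfl⟩ := Finset.mem_image.mp (vars_rename _ _ hw)
  exact ⟨Fin.succ_ne_zero _, Fin.succAbove_ne _ _⟩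

theorem det_mvPolynomialX_succ :
    (mvPolynomialX (Fin (m + 1)) (Fin (m + 1)) F).det =
      ∑ j : Fin (m + 1), (-1) ^ (j : ℕ) * X (0, j) * firstRowMinor F j := by
  rw [det_succ_row_zero]
  rfl

theorem pderiv_det_mvPolynomialX (j : Fin (m + 1)) :
    pderiv (0, j) (mvPolynomialX (Fin (m + 1)) (Fin (m + 1)) F).det =
      (-1) ^ (j : ℕ) * firstRowMinor F j := by
  have hminor : ∀ b, pderiv (0, j) (firstRowMinor F b) = 0 := fun b =>
    pderiv_eq_zero_of_notMem_vars fun h => (mem_vars_firstRowMinor h).1 rfl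
  rw [det_mvPolynomialX_succ, map_sum, Finset.sum_eq_single j]
  · simp [hminor, mul_comm]
  · intro b _ hb
    simp [hminor, pderiv_X, hb]
  · simp

theorem degreeOf_det_mvPolynomialX_le_one (j : Fin (m + 1)) :
    degreeOf (0, j) (mvPolynomialX (Fin (m + 1)) (Fin (m + 1)) F).det ≤ 1 := by
  classical
  rw [det_mvPolynomialX_succ]
  refine (degreeOf_sum_le _ _ _).trans (Finset.sup_le fun b _ => ?_)
  have hsign :
      degreeOf (0, j) ((-1) ^ (b : ℕ) : MvPolynomial (Fin (m + 1) × Fin (m + 1)) F) = 0 := by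
    rw [← map_one C, ← map_neg, ← map_pow, degreeOf_C]
  have hX : degreeOf (0, j) (X (0, b) : MvPolynomial (Fin (m + 1) × Fin (m + 1)) F) ≤ 1 := by
    rw [degreeOf_X]; split_ifs <;> omega
  have hminor : degreeOf (0, j) (firstRowMinor F b) = 0 := by
    rw [← not_ne_iff, ← mem_vars_iff_degreeOf_ne_zero]
    exact fun h => (mem_vars_firstRowMinor h).1 rfl
  refine (degreeOf_mul_le _ _ _).trans
    ((Nat.add_le_add_right (degreeOf_mul_le _ _ _) _).trans ?_)
  omega

theorem isUnit_of_dvd_det_mvPolynomialX {q : MvPolynomial (Fin (m + 1) × Fin (m + 1)) F}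
    (hq : q ∣ (mvPolynomialX (Fin (m + 1)) (Fin (m + 1)) F).det) (h₀ : (0, 0) ∉ q.vars) :
    IsUnit q := by
  have hminor : ∀ j, (0, j) ∉ q.vars → q ∣ firstRowMinor F j := fun j hj => by
    have := dvd_pderiv_of_dvd hq hj
    rwa [pderiv_det_mvPolynomialX, (isUnit_neg_one.pow _).dvd_mul_left] at this
  have hrow : ∀ j, (0, j) ∉ q.vars := fun j =>
    notMem_vars_of_dvd (hminor 0 h₀) (firstRowMinor_ne_zero 0)
      fun h => (mem_vars_firstRowMinor h).1 rfl
  have hvars : q.vars = ∅ := Finset.eq_empty_of_forall_notMem fun ij => by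
    obtain ⟨i, j⟩ := ij
    exact notMem_vars_of_dvd (hminor j (hrow j)) (firstRowMinor_ne_zero j)
      fun h => (mem_vars_firstRowMinor h).2 rfl
  exact isUnit_of_vars_eq_empty
    (ne_zero_of_dvd_ne_zero (det_mvPolynomialX_ne_zero _ F) hq) hvars

end GenericDet

section DetDvd

open Matrix

variable {F : Type*} [Field F] {m : ℕ}

theorem natDegree_equivPolynomialIn_det_mvPolynomialX :
    (equivPolynomialIn (0, 0)
      (mvPolynomialX (Fin (m + 1)) (Fin (m + 1)) F).det).natDegree = 1 := by
  refine (natDegree_equivPolynomialIn _ _).trans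
    (le_antisymm (degreeOf_det_mvPolynomialX_le_one 0) ?_)
  rw [Nat.one_le_iff_ne_zero, ← mem_vars_iff_degreeOf_ne_zero]
  by_contra h
  have := (pderiv_eq_zero_of_notMem_vars h).symm.trans (pderiv_det_mvPolynomialX 0)
  exact firstRowMinor_ne_zero (F := F) 0 (by simpa using this.symm)

theorem isPrimitive_equivPolynomialIn_det_mvPolynomialX :
    (equivPolynomialIn (0, 0) (mvPolynomialX (Fin (m + 1)) (Fin (m + 1)) F).det).IsPrimitive :=
  fun r hr => by
    have hunit := isUnit_of_dvd_det_mvPolynomialX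
      (by simpa using map_dvd (equivPolynomialIn (0, 0)).symm hr)
      (notMem_vars_equivPolynomialIn_symm_C _ r)
    exact Polynomial.isUnit_C.mp (by simpa using hunit.map (equivPolynomialIn (0, 0)))

theorem det_mvPolynomialX_dvd_of_eval_eq_zero [Infinite F]
    {N : MvPolynomial (Fin (m + 1) × Fin (m + 1)) F}
    (hN : ∀ s, (Matrix.of fun i j => s (i, j)).det = 0 → eval s N = 0) :
    (mvPolynomialX (Fin (m + 1)) (Fin (m + 1)) F).det ∣ N := by
  set w₀ : Fin (m + 1) × Fin (m + 1) := (0, 0)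
  set τ := equivPolynomialIn (R := F) w₀
  set dP := τ (mvPolynomialX (Fin (m + 1)) (Fin (m + 1)) F).det
  have hdeg : dP.natDegree = 1 := natDegree_equivPolynomialIn_det_mvPolynomialX
  have hdP : dP = .C (dP.coeff 1) * .X + .C (dP.coeff 0) :=
    Polynomial.eq_X_add_C_of_natDegree_le_one hdeg.le
  have hD : dP.coeff 1 ≠ 0 := by
    have hdP0 : dP ≠ 0 := Polynomial.ne_zero_of_natDegree_gt (hdeg ▸ zero_lt_one)
    simpa [Polynomial.leadingCoeff, hdeg] using Polynomial.leadingCoeff_ne_zero.mpr hdP0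
  have hroot := isRoot_map_equivPolynomialIn_of_eval_eq_zero hdP hD
    (fun s hs => hN s (by rwa [eval_det_mvPolynomialX] at hs))
    (FractionRing (MvPolynomial {b // b ≠ w₀} F))
  have hprim : (Polynomial.C (dP.coeff 1) * .X + .C (dP.coeff 0)).IsPrimitive :=
    hdP ▸ isPrimitive_equivPolynomialIn_det_mvPolynomialX (F := F) (m := m)
  have hdvd := hprim.dvd_of_isRoot hD hroot
  rw [← hdP] at hdvd
  exact (map_dvd_iff τ).mp hdvd

end DetDvd

open Matrix in
theorem IsCHNorm.det_mvPolynomialX_dvd {F : Type*} [Field F] [Infinite F] {n k : ℕ}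
    {N : MvPolynomial (Fin n × Fin n) F} (hN : IsCHNorm (stdBasis F (Fin n) (Fin n)) k N) :
    (mvPolynomialX (Fin n) (Fin n) F).det ∣ N := by
  cases n with
  | zero => simp [det_isEmpty]
  | succ m =>
    refine det_mvPolynomialX_dvd_of_eval_eq_zero fun s hs => ?_
    simpa [polyFun_stdBasis] using hN.polyFun_eq_zero_of_det_eq_zero hs

/-- The determinant is the minimal CH-norm on the matrix algebra `Mₙ(F)` over an infinite
field `F`: it is a CH-norm of degree `n` and every CH-norm is a multiplicative polynomial
map times the determinant. -/
theorem stmt8 (F : Type*) [Field F] [Infinite F] (n : ℕ) :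
    ∃ p : MvPolynomial (Fin n × Fin n) F,
      (∀ M : Matrix (Fin n) (Fin n) F,
        polyFun (Matrix.stdBasis F (Fin n) (Fin n)) p M = M.det) ∧
      IsCHNorm (Matrix.stdBasis F (Fin n) (Fin n)) n p ∧
      ∀ (k : ℕ) (N : MvPolynomial (Fin n × Fin n) F),
        IsCHNorm (Matrix.stdBasis F (Fin n) (Fin n)) k N →
        ∃ g : MvPolynomial (Fin n × Fin n) F,
          (∀ X Y : Matrix (Fin n) (Fin n) F,
            polyFun (Matrix.stdBasis F (Fin n) (Fin n)) g (X * Y) =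
              polyFun (Matrix.stdBasis F (Fin n) (Fin n)) g X *
                polyFun (Matrix.stdBasis F (Fin n) (Fin n)) g Y) ∧
          ∀ M : Matrix (Fin n) (Fin n) F,
            polyFun (Matrix.stdBasis F (Fin n) (Fin n)) N M =
              polyFun (Matrix.stdBasis F (Fin n) (Fin n)) g M * M.det := by
  refine ⟨_, polyFun_stdBasis_det, by simpa using isCHNorm_det (F := F) (m := Fin n),
    fun k N hN => ?_⟩
  obtain ⟨g, rfl⟩ := hN.det_mvPolynomialX_dvd
  exact ⟨g, Matrix.IsPolynomialFun.map_mul_of_eq_mul_det ⟨g, polyFun_stdBasis g⟩ hN.mult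
    (polyFun_stdBasis_det_mul g), polyFun_stdBasis_det_mul g⟩
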